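/- arXiv:2005.10495 — 4 statements merged into one kernel-verified Lean document; each statement's English description precedes it below -/
import Mathlib

section
/- Consider the distributed Nash equilibrium seeking dynamics over a weight-balanced strongly connected digraph: Z : [0, ∞) → ℝ^{N×N} is differentiable and satisfies, for all t ≥ 0, Ż(t) = −α L Z(t) − diag(𝐅(Z(t))), where diag(v) denotes the diagonal matrix with entries v_1, …, v_N (entrywise: d/dt Z_{ij}(t) = −α Σ_k L_{ik} Z_{kj}(t) − δ_{ij} 𝐅(Z(t))_i). Assume: (i) F is l̲-strongly monotone and l̄-Lipschitz with l̲, l̄ > 0; (ii) 𝐅 is l_F-Lipschitz with l_F > 0, and set l = max(l̄, l_F); (iii) L is the Laplacian of a weight-balanced strongly connected digraph and λ₂ > 0 satisfies xᵀ Sym(L) x ≥ λ₂ ‖x‖² for all x ∈ ℝ^N with 1ᵀx = 0, where Sym(L) = (L + Lᵀ)/2; (iv) z* ∈ ℝ^N satisfies F(z*) = 0; (v) α > (1/λ₂)(l²/l̲ + l). Then there exist constants κ > 0 and ν > 0, independent of the initial condition, such that for all t ≥ 0, ‖Z(t) − 1 (z*)ᵀ‖ ≤ κ e^{−ν t} ‖Z(0)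 − 1 (z*)ᵀ‖; in particular every row Zⁱ(t) converges exponentially to z* as t → ∞. -/
open scoped BigOperators

/-- Euclidean norm of a vector in `ℝ^N`. -/
noncomputable def vnorm {N : ℕ} (x : Fin N → ℝ) : ℝ := Real.sqrt (∑ i, (x i) ^ 2)

/-- Frobenius norm of a matrix in `ℝ^{N×N}`. -/
noncomputable def mnorm {N : ℕ} (A : Matrix (Fin N) (Fin N) ℝ) : ℝ :=
  Real.sqrt (∑ i, ∑ j, (A i j) ^ 2)

/-!
Lyapunov argument for `V(Z) = ‖Z - 1 z*ᵀ‖²`. Writing `Z = 1 z̄ᵀ + Y` with `z̄` the column mean,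
the columns of `Y` sum to zero and `V = N ‖z̄ - z*‖² + ‖Y‖²`. Along the flow, `L 1 = 0` and
`1ᵀ L = 0` reduce the consensus term to `-2α ⟨Y, L Y⟩ ≤ -2α λ₂ ‖Y‖²`, while strong monotonicity
of `F` at `z̄` and the two Lipschitz bounds control the pseudogradient term. Together,
`V̇ ≤ -2 q(‖z̄ - z*‖, ‖Y‖)` for `q(x, y) = l̲ x² - 2 l x y + (α λ₂ - l) y²`, which the gain
condition makes positive definite; so `V̇ ≤ -2 ν V` and Grönwall gives the claim with `κ = 1`.
-/

open Finset Matrix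

theorem exists_pos_mul_sq_add_sq_le {p q r : ℝ} (hp : 0 < p) (hpqr : r ^ 2 < p * q) :
    ∃ μ > 0, ∀ x y : ℝ, μ * (x ^ 2 + y ^ 2) ≤ p * x ^ 2 - 2 * r * x * y + q * y ^ 2 := by
  have hq : 0 < q := pos_of_mul_pos_right (lt_of_le_of_lt (sq_nonneg r) hpqr) hp.le
  refine ⟨(p * q - r ^ 2) / (p + q), by apply div_pos <;> linarith, fun x y => ?_⟩
  -- `μ = det / trace`: scaled by `p + q`, the gap is `(p x - r y)² + (r x - q y)²`
  rw [div_mul_eq_mul_div, div_le_iff₀ (by linarith)]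
  nlinarith [sq_nonneg (p * x - r * y), sq_nonneg (r * x - q * y)]

theorem le_mul_exp_of_hasDerivAt_le_neg_mul {V V' : ℝ → ℝ} {c : ℝ}
    (hV : ∀ t ≥ 0, HasDerivAt V (V' t) t) (hV' : ∀ t ≥ 0, V' t ≤ -c * V t)
    {t : ℝ} (ht : 0 ≤ t) : V t ≤ V 0 * Real.exp (-c * t) := by
  have hg : ∀ s ≥ 0, HasDerivAt (fun u => V u * Real.exp (c * u))
      ((V' s + c * V s) * Real.exp (c * s)) s := fun s hs => by
    refine ((hV s hs).fun_mul ((hasDerivAt_id s).const_mul c).exp).congr_deriv ?_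
    simp only [id]
    ring
  have hanti : AntitoneOn (fun u => V u * Real.exp (c * u)) (Set.Ici 0) := by
    refine antitoneOn_of_hasDerivWithinAt_nonpos (convex_Ici 0)
      (fun s hs => (hg s hs).continuousAt.continuousWithinAt)
      (fun s hs => (hg s (interior_subset hs)).hasDerivWithinAt) fun s hs => ?_
    have := hV' s (interior_subset hs)
    exact mul_nonpos_of_nonpos_of_nonneg (by linarith) (Real.exp_pos _).le
  have := hanti Set.self_mem_Ici (Set.mem_Ici.2 ht) ht
  simp only [mul_zero, Real.exp_zero, mul_one] at this
  rwa [neg_mul, Real.exp_neg, ← div_eq_mul_inv, le_div_iff₀ (Real.exp_pos _)]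

variable {N : ℕ}

theorem vnorm_sq (x : Fin N → ℝ) : vnorm x ^ 2 = ∑ i, x i ^ 2 :=
  Real.sq_sqrt (by positivity)

theorem mnorm_sq (A : Matrix (Fin N) (Fin N) ℝ) : mnorm A ^ 2 = ∑ i, ∑ j, A i j ^ 2 :=
  Real.sq_sqrt (by positivity)

theorem vnorm_nonneg (x : Fin N → ℝ) : 0 ≤ vnorm x := Real.sqrt_nonneg _

theorem mnorm_nonneg (A : Matrix (Fin N) (Fin N) ℝ) : 0 ≤ mnorm A := Real.sqrt_nonneg _

theorem neg_vnorm_mul_vnorm_le_sum_mul (x y : Fin N → ℝ) :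
    -(vnorm x * vnorm y) ≤ ∑ i, x i * y i := by
  have := Real.sum_mul_le_sqrt_mul_sqrt univ (-x) y
  simp only [Pi.neg_apply, neg_mul, sum_neg_distrib, neg_sq] at this
  exact neg_le.1 this

theorem vnorm_diag_le_mnorm (A : Matrix (Fin N) (Fin N) ℝ) : vnorm A.diag ≤ mnorm A :=
  Real.sqrt_le_sqrt <| sum_le_sum fun i _ =>
    single_le_sum (f := fun j => A i j ^ 2) (fun _ _ => sq_nonneg _) (mem_univ i)

theorem hasDerivAt_mnorm_sq {Z : ℝ → Matrix (Fin N) (Fin N) ℝ} {Z' : Matrix (Fin N) (Fin N) ℝ}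
    {t : ℝ} (hZ : ∀ i j, HasDerivAt (fun s => Z s i j) (Z' i j) t) :
    HasDerivAt (fun s => mnorm (Z s) ^ 2) (∑ i, ∑ j, 2 * Z t i j * Z' i j) t := by
  simp only [mnorm_sq]
  refine HasDerivAt.fun_sum fun i _ => HasDerivAt.fun_sum fun j _ => ?_
  exact ((hZ i j).fun_pow 2).congr_deriv (by ring)

theorem laplacian_sum_row_eq_zero {a : Fin N → Fin N → ℝ} {L : Matrix (Fin N) (Fin N) ℝ}
    (ha_diag : ∀ i, a i i = 0) (hL : ∀ i j, L i j = if i = j then ∑ k, a i k else -a i j)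
    (i : Fin N) : ∑ j, L i j = 0 := by
  have hL' : ∀ j, L i j = (if i = j then ∑ k, a i k else 0) - a i j := fun j => by
    rw [hL]; split_ifs with h <;> simp [h, ha_diag]
  simp [hL', sum_sub_distrib]

noncomputable def colMean (M : Matrix (Fin N) (Fin N) ℝ) : Fin N → ℝ :=
  fun j => (∑ i, M i j) / N

theorem sum_sub_colMean (hN : N ≠ 0) (M : Matrix (Fin N) (Fin N) ℝ) (j : Fin N) :
    ∑ i, (M - replicateRow (Fin N) (colMean M)) i j = 0 := by
  simp only [Matrix.sub_apply, replicateRow_apply, colMean, sum_sub_distrib, sum_const, card_univ,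
    Fintype.card_fin, nsmul_eq_mul]
  field_simp
  ring

theorem mnorm_sq_add_replicateRow {Y : Matrix (Fin N) (Fin N) ℝ} (hY : ∀ j, ∑ i, Y i j = 0)
    (c : Fin N → ℝ) : mnorm (Y + replicateRow (Fin N) c) ^ 2 = N * vnorm c ^ 2 + mnorm Y ^ 2 := by
  have hcross : ∑ i, ∑ j, Y i j * c j = 0 := by
    rw [sum_comm]; simp [← sum_mul, hY]
  simp only [mnorm_sq, vnorm_sq, Matrix.add_apply, replicateRow_apply, add_sq, sum_add_distrib]
  simp only [mul_assoc, ← mul_sum, hcross, sum_const, card_univ, Fintype.card_fin, nsmul_eq_mul]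
  ring

section

variable {ι : Type*} [Fintype ι] {L : Matrix ι ι ℝ}

theorem mul_replicateRow_eq_zero (hrow : ∀ i, ∑ j, L i j = 0) {m : Type*} (c : m → ℝ) :
    L * replicateRow ι c = 0 := by
  ext i j
  simp [mul_apply, ← sum_mul, hrow]

theorem sum_mul_mul_apply_eq_zero (hbal : ∀ j, ∑ i, L i j = 0) {m : Type*} [Fintype m]
    (c : m → ℝ) (Y : Matrix ι m ℝ) : ∑ i, ∑ j, c j * (L * Y) i j = 0 := by
  simp only [mul_apply, mul_sum]
  rw [sum_comm]
  refine sum_eq_zero fun j _ => ?_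
  rw [sum_comm]
  simp [mul_comm (c j), mul_assoc, ← sum_mul, hbal]

theorem sum_mul_symm_mul (x : ι → ℝ) :
    ∑ i, ∑ j, x i * ((L i j + L j i) / 2) * x j = ∑ i, x i * ∑ j, L i j * x j := by
  have hswap : ∑ i, ∑ j, x i * L j i * x j = ∑ i, ∑ j, x i * L i j * x j := by
    rw [sum_comm]; exact sum_congr rfl fun _ _ => sum_congr rfl fun _ _ => by ring
  calc ∑ i, ∑ j, x i * ((L i j + L j i) / 2) * x j
      = (∑ i, ∑ j, x i * L i j * x j + ∑ i, ∑ j, x i * L j i * x j) / 2 := by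
        simp only [← sum_add_distrib, sum_div]
        exact sum_congr rfl fun _ _ => sum_congr rfl fun _ _ => by ring
    _ = ∑ i, x i * ∑ j, L i j * x j := by
        rw [hswap, add_self_div_two]
        simp only [mul_sum, mul_assoc]

end

section

variable {L : Matrix (Fin N) (Fin N) ℝ}

theorem mul_mnorm_sq_le_sum_mul_laplacian {lam2 : ℝ}
    (hlam2 : ∀ x : Fin N → ℝ, ∑ i, x i = 0 →
      lam2 * vnorm x ^ 2 ≤ ∑ i, ∑ j, x i * ((L i j + L j i) / 2) * x j)
    {Y : Matrix (Fin N) (Fin N) ℝ} (hY : ∀ j, ∑ i, Y i j = 0) :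
    lam2 * mnorm Y ^ 2 ≤ ∑ i, ∑ j, Y i j * (L * Y) i j := by
  have hcol : ∀ j, lam2 * ∑ i, Y i j ^ 2 ≤ ∑ i, Y i j * (L * Y) i j := fun j => by
    simpa only [vnorm_sq, sum_mul_symm_mul, mul_apply] using hlam2 (fun i => Y i j) (hY j)
  rw [mnorm_sq, sum_comm, mul_sum, sum_comm (f := fun i j => Y i j * (L * Y) i j)]
  exact sum_le_sum fun j _ => hcol j

theorem mul_mnorm_sq_le_laplacian_energy (hN : N ≠ 0) (hrow : ∀ i, ∑ j, L i j = 0)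
    (hbal : ∀ j, ∑ i, L i j = 0) {lam2 : ℝ}
    (hlam2 : ∀ x : Fin N → ℝ, ∑ i, x i = 0 →
      lam2 * vnorm x ^ 2 ≤ ∑ i, ∑ j, x i * ((L i j + L j i) / 2) * x j)
    (M : Matrix (Fin N) (Fin N) ℝ) (z : Fin N → ℝ) :
    lam2 * mnorm (M - replicateRow (Fin N) (colMean M)) ^ 2 ≤
      ∑ i, ∑ j, (M - replicateRow (Fin N) z) i j * (L * M) i j := by
  set Y := M - replicateRow (Fin N) (colMean M)
  have hLM : L * M = L * Y := by
    rw [Matrix.mul_sub, mul_replicateRow_eq_zero hrow, sub_zero]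
  have hE : ∀ i j, (M - replicateRow (Fin N) z) i j = Y i j + (colMean M - z) j := by
    simp [Y]
  calc lam2 * mnorm Y ^ 2 ≤ ∑ i, ∑ j, Y i j * (L * Y) i j :=
        mul_mnorm_sq_le_sum_mul_laplacian hlam2 (sum_sub_colMean hN M)
    _ = ∑ i, ∑ j, Y i j * (L * Y) i j + ∑ i, ∑ j, (colMean M - z) j * (L * Y) i j := by
        rw [sum_mul_mul_apply_eq_zero hbal, add_zero]
    _ = ∑ i, ∑ j, (M - replicateRow (Fin N) z) i j * (L * M) i j := by
        simp only [hE, hLM, add_mul, sum_add_distrib]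

end

theorem le_sum_diag_mul_pseudogradient {F : (Fin N → ℝ) → Fin N → ℝ}
    {bF : Matrix (Fin N) (Fin N) ℝ → Fin N → ℝ} (hbF : ∀ Z i, bF Z i = F (Z i) i)
    {lunder lbar lF : ℝ}
    (hmono : ∀ x y : Fin N → ℝ,
      lunder * vnorm (x - y) ^ 2 ≤ ∑ i, (F x i - F y i) * (x i - y i))
    (hFlip : ∀ x y : Fin N → ℝ, vnorm (F x - F y) ≤ lbar * vnorm (x - y))
    (hbFlip : ∀ Z W : Matrix (Fin N) (Fin N) ℝ, vnorm (bF Z - bF W) ≤ lF * mnorm (Z - W))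
    (M : Matrix (Fin N) (Fin N) ℝ) (w z : Fin N → ℝ) :
    lunder * vnorm (w - z) ^ 2
        - (lbar + lF) * (vnorm (w - z) * mnorm (M - replicateRow (Fin N) w))
        - lF * mnorm (M - replicateRow (Fin N) w) ^ 2
      ≤ ∑ i, (M i i - z i) * (bF M i - F z i) := by
  set Y := M - replicateRow (Fin N) w
  set A := vnorm (w - z)
  set B := mnorm Y
  have hbFw : bF (replicateRow (Fin N) w) = F w := funext fun i => hbF _ i
  have hr : vnorm (bF M - F w) ≤ lF * B := hbFw ▸ hbFlip M _
  have hg : vnorm (F w - F z) ≤ lbar * A := hFlip w z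
  have hd : vnorm Y.diag ≤ B := vnorm_diag_le_mnorm Y
  have hsplit : ∑ i, (M i i - z i) * (bF M i - F z i) =
      ∑ i, (F w i - F z i) * (w i - z i) + ∑ i, (w - z) i * (bF M - F w) i
        + ∑ i, Y.diag i * (F w - F z) i + ∑ i, Y.diag i * (bF M - F w) i := by
    simp only [← sum_add_distrib]
    refine sum_congr rfl fun i _ => ?_
    simp only [Y, diag_apply, Matrix.sub_apply, replicateRow_apply, Pi.sub_apply]
    ring
  have h1 := hmono w z
  have h2 := neg_vnorm_mul_vnorm_le_sum_mul (w - z) (bF M - F w)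
  have h3 := neg_vnorm_mul_vnorm_le_sum_mul Y.diag (F w - F z)
  have h4 := neg_vnorm_mul_vnorm_le_sum_mul Y.diag (bF M - F w)
  have hB := mnorm_nonneg Y
  have h2' : vnorm (w - z) * vnorm (bF M - F w) ≤ A * (lF * B) :=
    mul_le_mul_of_nonneg_left hr (vnorm_nonneg _)
  have h3' : vnorm Y.diag * vnorm (F w - F z) ≤ B * (lbar * A) :=
    mul_le_mul hd hg (vnorm_nonneg _) hB
  have h4' : vnorm Y.diag * vnorm (bF M - F w) ≤ B * (lF * B) :=
    mul_le_mul hd hr (vnorm_nonneg _) hB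
  rw [hsplit]
  linarith

noncomputable def nashSeekingField (α : ℝ) (L : Matrix (Fin N) (Fin N) ℝ)
    (bF : Matrix (Fin N) (Fin N) ℝ → Fin N → ℝ) (Z : Matrix (Fin N) (Fin N) ℝ) :
    Matrix (Fin N) (Fin N) ℝ :=
  -α • (L * Z) - diagonal (bF Z)

theorem sum_mul_nashSeekingField_eq (α : ℝ) (L : Matrix (Fin N) (Fin N) ℝ)
    (bF : Matrix (Fin N) (Fin N) ℝ → Fin N → ℝ) (E M : Matrix (Fin N) (Fin N) ℝ) :
    ∑ i, ∑ j, 2 * E i j * nashSeekingField α L bF M i j =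
      -2 * α * ∑ i, ∑ j, E i j * (L * M) i j - 2 * ∑ i, E i i * bF M i := by
  simp only [nashSeekingField, Matrix.sub_apply, Matrix.smul_apply, diagonal_apply, smul_eq_mul,
    mul_sub, sum_sub_distrib, mul_ite, mul_zero, sum_ite_eq, mem_univ, if_true, mul_sum]
  congr 1 <;> refine sum_congr rfl fun _ _ => ?_
  · exact sum_congr rfl fun _ _ => by ring
  · ring

theorem sum_mul_nashSeekingField_le (hN : 0 < N) {L : Matrix (Fin N) (Fin N) ℝ}
    (hrow : ∀ i, ∑ j, L i j = 0) (hbal : ∀ j, ∑ i, L i j = 0)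
    {F : (Fin N → ℝ) → Fin N → ℝ} {bF : Matrix (Fin N) (Fin N) ℝ → Fin N → ℝ}
    (hbF : ∀ Z i, bF Z i = F (Z i) i) {lunder lbar lF : ℝ}
    (hmono : ∀ x y : Fin N → ℝ,
      lunder * vnorm (x - y) ^ 2 ≤ ∑ i, (F x i - F y i) * (x i - y i))
    (hFlip : ∀ x y : Fin N → ℝ, vnorm (F x - F y) ≤ lbar * vnorm (x - y))
    (hbFlip : ∀ Z W : Matrix (Fin N) (Fin N) ℝ, vnorm (bF Z - bF W) ≤ lF * mnorm (Z - W))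
    {lam2 : ℝ} (hlam2 : ∀ x : Fin N → ℝ, ∑ i, x i = 0 →
      lam2 * vnorm x ^ 2 ≤ ∑ i, ∑ j, x i * ((L i j + L j i) / 2) * x j)
    {zstar : Fin N → ℝ} (hzstar : F zstar = 0) {α : ℝ} (hα : 0 ≤ α)
    {l : ℝ} (hlbar : lbar ≤ l) (hlF : lF ≤ l) {μ : ℝ} (hμ : 0 ≤ μ)
    (hq : ∀ x y : ℝ, μ * (x ^ 2 + y ^ 2) ≤
      lunder * x ^ 2 - 2 * l * x * y + (α * lam2 - l) * y ^ 2)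
    (M : Matrix (Fin N) (Fin N) ℝ) :
    ∑ i, ∑ j, 2 * (M - replicateRow (Fin N) zstar) i j * nashSeekingField α L bF M i j ≤
      -(2 * (μ / N)) * mnorm (M - replicateRow (Fin N) zstar) ^ 2 := by
  set Y := M - replicateRow (Fin N) (colMean M)
  set A := vnorm (colMean M - zstar)
  set B := mnorm Y
  have hV : mnorm (M - replicateRow (Fin N) zstar) ^ 2 = N * A ^ 2 + B ^ 2 := by
    rw [← mnorm_sq_add_replicateRow (sum_sub_colMean hN.ne' M)]
    congr 2
    ext i j
    simp
  have hlap : lam2 * B ^ 2 ≤ ∑ i, ∑ j, (M - replicateRow (Fin N) zstar) i j * (L * M) i j :=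
    mul_mnorm_sq_le_laplacian_energy hN.ne' hrow hbal hlam2 M zstar
  have hgrad : lunder * A ^ 2 - (lbar + lF) * (A * B) - lF * B ^ 2 ≤
      ∑ i, (M - replicateRow (Fin N) zstar) i i * bF M i := by
    simpa [hzstar] using le_sum_diag_mul_pseudogradient hbF hmono hFlip hbFlip M (colMean M) zstar
  rw [sum_mul_nashSeekingField_eq, hV]
  have hAB : 0 ≤ A * B := mul_nonneg (vnorm_nonneg _) (mnorm_nonneg _)
  have hμN : μ / N * B ^ 2 ≤ μ * B ^ 2 :=
    mul_le_mul_of_nonneg_right (div_le_self hμ (by exact_mod_cast hN)) (sq_nonneg B)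
  have hNμ : μ / N * (N * A ^ 2) = μ * A ^ 2 := by field_simp
  have hlapα := mul_le_mul_of_nonneg_left hlap hα
  have hqAB := hq A B
  linarith [mul_le_mul_of_nonneg_right hlbar hAB, mul_le_mul_of_nonneg_right hlF hAB,
    mul_le_mul_of_nonneg_right hlF (sq_nonneg B)]

theorem nash_seeking_weight_balanced_general
    (N : ℕ) (hN : 1 ≤ N)
    -- the weighted digraph and its Laplacian
    (a : Fin N → Fin N → ℝ) (L : Matrix (Fin N) (Fin N) ℝ)
    (ha_diag : ∀ i, a i i = 0)
    (hLdef : ∀ i j, L i j = if i = j then ∑ k, a i k else -(a i j))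
    -- weight-balanced: 1ᵀ L = 0
    (hbal : ∀ j, ∑ i, L i j = 0)
    -- pseudogradient `F` and extended pseudogradient `𝐅` (row-wise evaluation)
    (F : (Fin N → ℝ) → (Fin N → ℝ)) (bF : Matrix (Fin N) (Fin N) ℝ → (Fin N → ℝ))
    (hbF : ∀ Z i, bF Z i = F (Z i) i)
    (lunder lbar lF : ℝ) (hlunder : 0 < lunder) (hlbar : 0 < lbar)
    -- (i) F is l̲-strongly monotone and l̄-Lipschitz
    (hmono : ∀ x y : Fin N → ℝ,
      lunder * (vnorm (x - y)) ^ 2 ≤ ∑ i, (F x i - F y i) * (x i - y i))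
    (hFlip : ∀ x y : Fin N → ℝ, vnorm (F x - F y) ≤ lbar * vnorm (x - y))
    -- (ii) 𝐅 is l_F-Lipschitz (Frobenius norm on matrices)
    (hbFlip : ∀ Z W : Matrix (Fin N) (Fin N) ℝ,
      vnorm (bF Z - bF W) ≤ lF * mnorm (Z - W))
    -- (iii) λ₂ > 0 with xᵀ Sym(L) x ≥ λ₂‖x‖² whenever 1ᵀx = 0
    (lam2 : ℝ) (hlam2 : 0 < lam2)
    (hlam2spec : ∀ x : Fin N → ℝ, (∑ i, x i) = 0 →
      lam2 * (vnorm x) ^ 2 ≤ ∑ i, ∑ j, x i * ((L i j + L j i) / 2) * x j)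
    -- (iv) z* with F(z*) = 0
    (zstar : Fin N → ℝ) (hzstar : F zstar = 0)
    -- (v) the gain condition α > (1/λ₂)(l²/l̲ + l) with l = max(l̄, l_F)
    (α : ℝ)
    (hα : α > (1 / lam2) * ((max lbar lF) ^ 2 / lunder + max lbar lF)) :
    -- conclusion: uniform exponential convergence of every trajectory to 1 (z*)ᵀ
    ∃ κ > (0:ℝ), ∃ ν > (0:ℝ), ∀ Z : ℝ → Matrix (Fin N) (Fin N) ℝ,
      (∀ t ≥ (0:ℝ), ∀ i j, HasDerivAt (fun s => Z s i j)
          (-α * (∑ k, L i k * Z t k j) - (if i = j then bF (Z t) i else 0)) t) →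
      ∀ t ≥ (0:ℝ),
        mnorm (Z t - Matrix.of (fun _ j => zstar j)) ≤
          κ * Real.exp (-ν * t) * mnorm (Z 0 - Matrix.of (fun _ j => zstar j)) := by
  set l := max lbar lF
  have hl : 0 < l := hlbar.trans_le (le_max_left _ _)
  rw [gt_iff_lt, one_div_mul_eq_div, div_lt_iff₀ hlam2] at hα
  have hgain : l ^ 2 < lunder * (α * lam2 - l) := (div_lt_iff₀' hlunder).1 (by linarith)
  have hα0 : 0 ≤ α := by nlinarith [div_nonneg (sq_nonneg l) hlunder.le]
  obtain ⟨μ, hμ, hq⟩ := exists_pos_mul_sq_add_sq_le hlunder hgain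
  refine ⟨1, one_pos, μ / N, by positivity, fun Z hZ t ht => ?_⟩
  change mnorm (Z t - replicateRow (Fin N) zstar) ≤
    1 * Real.exp (-(μ / N) * t) * mnorm (Z 0 - replicateRow (Fin N) zstar)
  have hdecay := le_mul_exp_of_hasDerivAt_le_neg_mul
    (V := fun s => mnorm (Z s - replicateRow (Fin N) zstar) ^ 2)
    (fun s hs => hasDerivAt_mnorm_sq fun i j => (hZ s hs i j).sub_const (zstar j))
    (fun s _ => sum_mul_nashSeekingField_le hN (laplacian_sum_row_eq_zero ha_diag hLdef) hbal
      hbF hmono hFlip hbFlip hlam2spec hzstar hα0 (le_max_left _ _) (le_max_right _ _) hμ.le hq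
      (Z s)) ht
  rw [one_mul, ← sq_le_sq₀ (mnorm_nonneg _) (mul_nonneg (Real.exp_pos _).le (mnorm_nonneg _))]
  refine hdecay.trans_eq ?_
  rw [mul_pow, ← Real.exp_nat_mul, mul_comm]
  congr 2
  push_cast
  ring

/-- Exponential convergence of the distributed Nash-equilibrium-seeking
dynamics `Ż = −α L Z − diag(𝐅(Z))` over a weight-balanced strongly connected digraph. -/
theorem nash_seeking_weight_balanced
    (N : ℕ) (hN : 1 ≤ N)
    -- the weighted digraph and its Laplacian
    (a : Fin N → Fin N → ℝ) (L : Matrix (Fin N) (Fin N) ℝ)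
    (ha_nonneg : ∀ i j, 0 ≤ a i j) (ha_diag : ∀ i, a i i = 0)
    (hLdef : ∀ i j, L i j = if i = j then ∑ k, a i k else -(a i j))
    -- strongly connected (irreducible adjacency matrix)
    (hconn : ∀ S : Finset (Fin N), S.Nonempty → S ≠ Finset.univ →
      ∃ i ∈ S, ∃ j, j ∉ S ∧ 0 < a i j)
    -- weight-balanced: 1ᵀ L = 0
    (hbal : ∀ j, ∑ i, L i j = 0)
    -- pseudogradient `F` and extended pseudogradient `𝐅` (row-wise evaluation)
    (F : (Fin N → ℝ) → (Fin N → ℝ)) (bF : Matrix (Fin N) (Fin N) ℝ → (Fin N → ℝ))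
    (hbF : ∀ Z i, bF Z i = F (Z i) i)
    (lunder lbar lF : ℝ) (hlunder : 0 < lunder) (hlbar : 0 < lbar) (hlF : 0 < lF)
    -- (i) F is l̲-strongly monotone and l̄-Lipschitz
    (hmono : ∀ x y : Fin N → ℝ,
      lunder * (vnorm (x - y)) ^ 2 ≤ ∑ i, (F x i - F y i) * (x i - y i))
    (hFlip : ∀ x y : Fin N → ℝ, vnorm (F x - F y) ≤ lbar * vnorm (x - y))
    -- (ii) 𝐅 is l_F-Lipschitz (Frobenius norm on matrices)
    (hbFlip : ∀ Z W : Matrix (Fin N) (Fin N) ℝ,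
      vnorm (bF Z - bF W) ≤ lF * mnorm (Z - W))
    -- (iii) λ₂ > 0 with xᵀ Sym(L) x ≥ λ₂‖x‖² whenever 1ᵀx = 0
    (lam2 : ℝ) (hlam2 : 0 < lam2)
    (hlam2spec : ∀ x : Fin N → ℝ, (∑ i, x i) = 0 →
      lam2 * (vnorm x) ^ 2 ≤ ∑ i, ∑ j, x i * ((L i j + L j i) / 2) * x j)
    -- (iv) z* with F(z*) = 0
    (zstar : Fin N → ℝ) (hzstar : F zstar = 0)
    -- (v) the gain condition α > (1/λ₂)(l²/l̲ + l) with l = max(l̄, l_F)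
    (α : ℝ)
    (hα : α > (1 / lam2) * ((max lbar lF) ^ 2 / lunder + max lbar lF)) :
    -- conclusion: uniform exponential convergence of every trajectory to 1 (z*)ᵀ
    ∃ κ > (0:ℝ), ∃ ν > (0:ℝ), ∀ Z : ℝ → Matrix (Fin N) (Fin N) ℝ,
      (∀ t ≥ (0:ℝ), ∀ i j, HasDerivAt (fun s => Z s i j)
          (-α * (∑ k, L i k * Z t k j) - (if i = j then bF (Z t) i else 0)) t) →
      ∀ t ≥ (0:ℝ),
        mnorm (Z t - Matrix.of (fun _ j => zstar j)) ≤
          κ * Real.exp (-ν * t) * mnorm (Z 0 - Matrix.of (fun _ j => zstar j)) :=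
  nash_seeking_weight_balanced_general N hN a L ha_diag hLdef hbal F bF hbF lunder lbar lF hlunder
    hlbar hmono hFlip hbFlip lam2 hlam2 hlam2spec zstar hzstar α hα
end

section
/- Let L ∈ ℝ^{N×N} be the Laplacian of a strongly connected weighted digraph with weights a_{ij}, and let ξ ∈ ℝ^N be the vector with ξᵀL = 0 and ξᵀ1 = 1. For i = 1, …, N let ξⁱ : [0, ∞) → ℝ^N be differentiable functions satisfying the consensus dynamics d/dt ξⁱ(t) = −Σ_{j=1}^N a_{ij} (ξⁱ(t) − ξʲ(t)) for all t ≥ 0, with initial conditions ξⁱ(0) = e_i (the i-th standard basis vector, i.e., ξⁱ_i(0) = 1 and ξⁱ_j(0) = 0 for j ≠ i). Then for every i: (a) the i-th component ξⁱ_i(t) > 0 for every t ≥ 0; and (b) there exist constants c > 0 and β > 0 such that |ξⁱ_i(t) − ξ_i| ≤ c e^{−β t} for all t ≥ 0, i.e., ξⁱ_i(t) converges exponentially to ξ_i as t → ∞. -/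
/-!
The trajectories are the columns of the propagator `P t = exp (t • -L)`, by uniqueness of
solutions of linear ODEs. Since `-L` is a Metzler matrix, `exp (-L) = e⁻ᶜ • exp (c • 1 - L)` with
`c • 1 - L` entrywise nonnegative for large `c`, so `P t` is nonnegative
with positive diagonal, and strong connectivity makes `P 1` entrywise positive. From `L 1 = 0` and
`ξᵀ L = 0`, `P t` is row-stochastic and `ξᵀ P t = ξᵀ`, hence `ξ_i = Σ_p ξ_p P(t)_{p i}`. A
row-stochastic matrix whose entries are all at least `δ` shrinks the oscillation `max - min` of a
vector by the factor `1 - N δ`; applied to the `i`-th column of `P t` along `t ↦ t + 1`, this makes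
the oscillation, and with it `|P(t)_{i i} - ξ_i|`, decay exponentially.
-/

open NormedSpace Finset Matrix

theorem abs_sub_dotProduct_le {n : Type*} [Fintype n] {w x : n → ℝ} {s : ℝ}
    (hw : ∑ p, w p = 1) (hx : ∀ p q, x p - x q ≤ s) (i : n) :
    |x i - w ⬝ᵥ x| ≤ (∑ p, |w p|) * s := by
  have hsplit : x i - w ⬝ᵥ x = ∑ p, w p * (x i - x p) := by
    simp only [dotProduct, mul_sub, sum_sub_distrib, ← sum_mul, hw]
    ring_nf
  rw [hsplit, sum_mul]
  refine (abs_sum_le_sum_abs _ _).trans (sum_le_sum fun p _ => ?_)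
  rw [abs_mul]
  exact mul_le_mul_of_nonneg_left (abs_sub_le_iff.2 ⟨hx i p, hx p i⟩) (abs_nonneg _)

theorem pow_le_inv_mul_exp {r t : ℝ} {k : ℕ} (hr0 : 0 < r) (hr1 : r ≤ 1) (hk : t < k + 1) :
    r ^ k ≤ r⁻¹ * Real.exp (Real.log r * t) := by
  rw [← Real.rpow_natCast, ← Real.rpow_def_of_pos hr0, ← Real.rpow_neg_one, ← Real.rpow_add hr0]
  exact Real.rpow_le_rpow_of_exponent_ge hr0 hr1 (by linarith)

namespace Matrix

variable {n : Type*}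

def IsMetzler (A : Matrix n n ℝ) : Prop := ∀ i j, i ≠ j → 0 ≤ A i j

/-- Strong connectivity of the digraph of positive entries of `A`, in cut form. -/
def IsCutConnected [Fintype n] (A : Matrix n n ℝ) : Prop :=
  ∀ S : Finset n, S.Nonempty → S ≠ univ → ∃ i ∈ S, ∃ j, j ∉ S ∧ 0 < A i j

theorem IsMetzler.smul {A : Matrix n n ℝ} (hA : A.IsMetzler) {t : ℝ} (ht : 0 ≤ t) :
    (t • A).IsMetzler :=
  fun i j hij => mul_nonneg ht (hA i j hij)

section Contraction

variable [Fintype n]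

theorem mulVec_sub_mulVec_le {Q : Matrix n n ℝ} {δ s : ℝ} (hQ : ∀ i j, δ ≤ Q i j)
    (hQ1 : Q *ᵥ 1 = 1) {v : n → ℝ} (hv : ∀ i j, v i - v j ≤ s) (i j : n) :
    (Q *ᵥ v) i - (Q *ᵥ v) j ≤ (1 - Fintype.card n * δ) * s := by
  have hrow : ∀ i, ∑ k, Q i k = 1 := fun i => by simpa [mulVec, dotProduct] using congrFun hQ1 i
  have : Nonempty n := ⟨i⟩
  obtain ⟨m, hm⟩ := Finite.exists_min v
  -- measuring `v` from its minimum makes every weight difference act on a value in `[0, s]`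
  have hcentered : (Q *ᵥ v) i - (Q *ᵥ v) j = ∑ k, (Q i k - Q j k) * (v k - v m) := by
    simp only [mulVec, dotProduct, sub_mul, mul_sub, sum_sub_distrib, ← sum_mul, hrow]
    ring
  calc (Q *ᵥ v) i - (Q *ᵥ v) j = ∑ k, (Q i k - Q j k) * (v k - v m) := hcentered
    _ ≤ ∑ k, (Q i k - δ) * s := sum_le_sum fun k _ =>
        (mul_le_mul_of_nonneg_right (by linarith [hQ j k]) (sub_nonneg.2 (hm k))).trans
          (mul_le_mul_of_nonneg_left (hv k m) (by linarith [hQ i k]))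
    _ = (1 - Fintype.card n * δ) * s := by
        rw [← sum_mul, sum_sub_distrib, hrow, sum_const, card_univ, nsmul_eq_mul]

theorem exists_contraction_of_pos [Nonempty n] {Q : Matrix n n ℝ} (hQ : ∀ i j, 0 < Q i j)
    (hQ1 : Q *ᵥ 1 = 1) :
    ∃ r, 0 < r ∧ r < 1 ∧
      ∀ v s, (∀ i j, v i - v j ≤ s) → ∀ i j, (Q *ᵥ v) i - (Q *ᵥ v) j ≤ r * s := by
  obtain ⟨⟨i₀, j₀⟩, hmin⟩ := Finite.exists_min fun p : n × n => Q p.1 p.2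
  have hcard : (1 : ℝ) ≤ Fintype.card n := by exact_mod_cast Fintype.card_pos
  have hδ : Fintype.card n * Q i₀ j₀ ≤ 1 := by
    calc Fintype.card n * Q i₀ j₀ = ∑ k, Q i₀ j₀ := by rw [sum_const, card_univ, nsmul_eq_mul]
      _ ≤ ∑ k, Q i₀ k := sum_le_sum fun k _ => hmin (i₀, k)
      _ = 1 := by simpa [mulVec, dotProduct] using congrFun hQ1 i₀
  have hpos := hQ i₀ j₀
  refine ⟨1 - Fintype.card n * (Q i₀ j₀ / 2), by nlinarith, by nlinarith,
    fun v s hv => mulVec_sub_mulVec_le (fun i j => ?_) hQ1 hv⟩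
  linarith [hmin (i, j)]

theorem sub_le_pow_of_mulVec {Q : Matrix n n ℝ} {r : ℝ}
    (hQ : ∀ v s, (∀ i j, v i - v j ≤ s) → ∀ i j, (Q *ᵥ v) i - (Q *ᵥ v) j ≤ r * s)
    {v : ℝ → n → ℝ} (hstep : ∀ t ≥ 0, v (t + 1) = Q *ᵥ v t)
    (hbound : ∀ t ≥ 0, ∀ i j, v t i - v t j ≤ 1) (k : ℕ) :
    ∀ t ≥ (k : ℝ), ∀ i j, v t i - v t j ≤ r ^ k := by
  induction k with
  | zero => simpa using hbound
  | succ k ih =>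
    intro t ht
    push_cast at ht
    have h := hstep (t - 1) (by linarith [k.cast_nonneg (α := ℝ)])
    rw [sub_add_cancel] at h
    rw [h, pow_succ']
    exact hQ _ _ (ih (t - 1) (by linarith))

end Contraction

variable [Fintype n] [DecidableEq n]

theorem hasSum_exp (A : Matrix n n ℝ) :
    HasSum (fun k : ℕ => (k.factorial⁻¹ : ℝ) • A ^ k) (exp A) := by
  let : NormedRing (Matrix n n ℝ) := Matrix.linftyOpNormedRing
  let : NormedAlgebra ℝ (Matrix n n ℝ) := Matrix.linftyOpNormedAlgebra
  exact exp_series_hasSum_exp' A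

theorem exp_eq_smul_exp_add_smul_one (A : Matrix n n ℝ) (c : ℝ) :
    exp A = Real.exp (-c) • exp (A + c • 1) := by
  rw [exp_add_of_commute _ _ ((Commute.one_right A).smul_right c), smul_one_eq_diagonal,
    exp_diagonal, Pi.exp_def, ← Real.exp_eq_exp_ℝ, ← smul_one_eq_diagonal, mul_smul_one,
    smul_smul, ← Real.exp_add, neg_add_cancel, Real.exp_zero, one_smul]

theorem exp_mulVec_of_mulVec_eq_zero {A : Matrix n n ℝ} {v : n → ℝ} (h : A *ᵥ v = 0) :
    exp A *ᵥ v = v := by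
  have hsum := ((hasSum_exp A).map (mulVec.addMonoidHomLeft v)
    (continuous_id.matrix_mulVec continuous_const)).unique (hasSum_single 0 fun k hk => ?_)
  · simpa [mulVec.addMonoidHomLeft] using hsum
  · obtain ⟨k, rfl⟩ := Nat.exists_eq_succ_of_ne_zero hk
    simp [mulVec.addMonoidHomLeft, smul_mulVec, pow_succ, ← mulVec_mulVec, h]

theorem vecMul_exp_of_vecMul_eq_zero {A : Matrix n n ℝ} {v : n → ℝ} (h : v ᵥ* A = 0) :
    v ᵥ* exp A = v := by
  rw [← mulVec_transpose, ← exp_transpose]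
  exact exp_mulVec_of_mulVec_eq_zero (by rwa [mulVec_transpose])

theorem hasDerivAt_exp_smul_mulVec (A : Matrix n n ℝ) (v : n → ℝ) (t : ℝ) :
    HasDerivAt (fun s : ℝ => exp (s • A) *ᵥ v) (A *ᵥ (exp (t • A) *ᵥ v)) t := by
  let : NormedRing (Matrix n n ℝ) := Matrix.linftyOpNormedRing
  let : NormedAlgebra ℝ (Matrix n n ℝ) := Matrix.linftyOpNormedAlgebra
  let mulVecCLM : Matrix n n ℝ →L[ℝ] n → ℝ := LinearMap.toContinuousLinearMap
    { toFun := fun M => M *ᵥ v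
      map_add' := fun M N => add_mulVec M N v
      map_smul' := fun c M => smul_mulVec c M v }
  exact (mulVecCLM.hasFDerivAt.comp_hasDerivAt t (hasDerivAt_exp_smul_const' A t)).congr_deriv
    (mulVec_mulVec _ _ _).symm

theorem eq_exp_smul_mulVec_of_hasDerivAt {A : Matrix n n ℝ} {x : ℝ → n → ℝ}
    (hx : ∀ t ≥ 0, HasDerivAt x (A *ᵥ x t) t) {t : ℝ} (ht : 0 ≤ t) :
    x t = exp (t • A) *ᵥ x 0 := by
  have hlip := (LinearMap.toContinuousLinearMap (mulVecLin A)).lipschitz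
  refine ODE_solution_unique_of_mem_Icc_right (v := fun _ y => A *ᵥ y) (s := fun _ => Set.univ)
    (fun _ _ => hlip.lipschitzOnWith) (fun s hs => (hx s hs.1).continuousAt.continuousWithinAt)
    (fun s hs => (hx s hs.1).hasDerivWithinAt) (fun _ _ => trivial)
    (fun s _ => (hasDerivAt_exp_smul_mulVec A _ s).continuousAt.continuousWithinAt)
    (fun s _ => (hasDerivAt_exp_smul_mulVec A _ s).hasDerivWithinAt) (fun _ _ => trivial)
    (by simp) ⟨ht, le_rfl⟩

theorem factorial_inv_mul_pow_apply_le_exp_apply {B : Matrix n n ℝ} (hB : ∀ i j, 0 ≤ B i j)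
    (k : ℕ) (i j : n) : (k.factorial⁻¹ : ℝ) * (B ^ k) i j ≤ exp B i j :=
  le_hasSum (Pi.hasSum.1 (Pi.hasSum.1 (hasSum_exp B) i) j) k fun m _ =>
    mul_nonneg (by positivity) (pow_apply_nonneg hB m i j)

theorem exists_pow_apply_pos_of_cut {B : Matrix n n ℝ} (hB : ∀ i j, 0 ≤ B i j)
    (hcut : B.IsCutConnected) (i j : n) : ∃ k, 0 < (B ^ k) i j := by
  let := toQuiver B
  classical
  -- no positive entry leaves the set of vertices reachable from `i`, so it is everything
  have hreach : univ.filter (fun j => Nonempty (Quiver.Path i j)) = univ := by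
    by_contra hne
    obtain ⟨p, hp, q, hq, hpq⟩ := hcut _ ⟨i, by simpa using ⟨Quiver.Path.nil⟩⟩ hne
    simp only [mem_filter, mem_univ, true_and] at hp hq
    exact hq ⟨hp.some.cons ⟨hpq⟩⟩
  obtain ⟨p⟩ := (mem_filter.1 (eq_univ_iff_forall.1 hreach j)).2
  exact ⟨p.length, (pow_apply_pos_iff_nonempty_path hB _ i j).2 ⟨⟨p, rfl⟩⟩⟩

theorem IsMetzler.exists_nonneg_add_smul_one {A : Matrix n n ℝ} (hA : A.IsMetzler) :
    ∃ c : ℝ, ∀ i j, 0 ≤ (A + c • 1) i j := by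
  refine ⟨∑ k, |A k k|, fun i j => ?_⟩
  rcases eq_or_ne i j with rfl | hij
  · have := single_le_sum (fun k _ => abs_nonneg (A k k)) (mem_univ i)
    simp only [add_apply, smul_apply, one_apply_eq, smul_eq_mul, mul_one]
    linarith [neg_abs_le (A i i)]
  · simpa [one_apply_ne hij] using hA i j hij

theorem IsMetzler.exp_apply_nonneg {A : Matrix n n ℝ} (hA : A.IsMetzler) (i j : n) :
    0 ≤ exp A i j := by
  obtain ⟨c, hc⟩ := hA.exists_nonneg_add_smul_one
  rw [exp_eq_smul_exp_add_smul_one A c, smul_apply, smul_eq_mul]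
  exact mul_nonneg (Real.exp_nonneg _) <|
    (mul_nonneg (by positivity) (pow_apply_nonneg hc 0 i j)).trans
      (factorial_inv_mul_pow_apply_le_exp_apply hc 0 i j)

theorem IsMetzler.exp_apply_self_pos {A : Matrix n n ℝ} (hA : A.IsMetzler) (i : n) :
    0 < exp A i i := by
  obtain ⟨c, hc⟩ := hA.exists_nonneg_add_smul_one
  rw [exp_eq_smul_exp_add_smul_one A c, smul_apply, smul_eq_mul]
  refine mul_pos (Real.exp_pos _) (lt_of_lt_of_le ?_
    (factorial_inv_mul_pow_apply_le_exp_apply hc 0 i i))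
  simp

theorem IsMetzler.exp_apply_pos {A : Matrix n n ℝ} (hA : A.IsMetzler) (hcut : A.IsCutConnected)
    (i j : n) : 0 < exp A i j := by
  obtain ⟨c, hc⟩ := hA.exists_nonneg_add_smul_one
  have hcut' : (A + c • 1).IsCutConnected := fun S hS hSu => by
    obtain ⟨p, hp, q, hq, hpq⟩ := hcut S hS hSu
    exact ⟨p, hp, q, hq, by simpa [one_apply_ne (ne_of_mem_of_not_mem hp hq)] using hpq⟩
  obtain ⟨k, hk⟩ := exists_pow_apply_pos_of_cut hc hcut' i j
  rw [exp_eq_smul_exp_add_smul_one A c, smul_apply, smul_eq_mul]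
  exact mul_pos (Real.exp_pos _) <|
    (mul_pos (by positivity) hk).trans_le (factorial_inv_mul_pow_apply_le_exp_apply hc k i j)

theorem IsMetzler.exists_abs_exp_smul_apply_sub_le {A : Matrix n n ℝ} (hA : A.IsMetzler)
    (hcut : A.IsCutConnected) (hA1 : A *ᵥ 1 = 0) {w : n → ℝ} (hwA : w ᵥ* A = 0)
    (hw1 : ∑ i, w i = 1) :
    ∃ c > (0 : ℝ), ∃ β > (0 : ℝ), ∀ t ≥ (0 : ℝ), ∀ i j,
      |exp (t • A) i j - w j| ≤ c * Real.exp (-β * t) := by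
  have : Nonempty n := univ_nonempty_iff.1 (nonempty_of_sum_ne_zero (hw1 ▸ one_ne_zero))
  have hrow (t : ℝ) : exp (t • A) *ᵥ 1 = 1 :=
    exp_mulVec_of_mulVec_eq_zero (by rw [smul_mulVec, hA1, smul_zero])
  have hw (t : ℝ) : w ᵥ* exp (t • A) = w :=
    vecMul_exp_of_vecMul_eq_zero (by rw [vecMul_smul, hwA, smul_zero])
  have hle_one {t : ℝ} (ht : 0 ≤ t) (i j : n) : exp (t • A) i j ≤ 1 := by
    calc exp (t • A) i j ≤ ∑ k, exp (t • A) i k :=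
          single_le_sum (fun k _ => (hA.smul ht).exp_apply_nonneg i k) (mem_univ j)
      _ = 1 := by simpa [mulVec, dotProduct] using congrFun (hrow t) i
  obtain ⟨r, hr0, hr1, hcontr⟩ := exists_contraction_of_pos
    (fun i j => by simpa using hA.exp_apply_pos hcut i j) (by simpa using hrow 1)
  have hw_abs : 1 ≤ ∑ i, |w i| := hw1 ▸ (le_abs_self _).trans (abs_sum_le_sum_abs w univ)
  refine ⟨(∑ i, |w i|) * r⁻¹, mul_pos (one_pos.trans_le hw_abs) (inv_pos.2 hr0),
    -Real.log r, neg_pos.2 (Real.log_neg hr0 hr1), fun t ht i j => ?_⟩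
  have hdecay := sub_le_pow_of_mulVec hcontr (v := fun s p => exp (s • A) p j)
    (fun s _ => by
      ext p
      rw [add_comm, add_smul, one_smul, exp_add_of_commute _ _ ((Commute.refl A).smul_right s)]
      simp [mul_apply, mulVec, dotProduct])
    (fun s hs p q => by linarith [hle_one hs p j, (hA.smul hs).exp_apply_nonneg q j]) ⌊t⌋₊ t
    (Nat.floor_le ht)
  calc |exp (t • A) i j - w j|
      = |(fun p => exp (t • A) p j) i - w ⬝ᵥ fun p => exp (t • A) p j| := by
        rw [← congrFun (hw t) j]
        rfl
    _ ≤ (∑ p, |w p|) * r ^ ⌊t⌋₊ := abs_sub_dotProduct_le hw1 hdecay i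
    _ ≤ (∑ p, |w p|) * (r⁻¹ * Real.exp (Real.log r * t)) := by
        gcongr
        exact pow_le_inv_mul_exp hr0 hr1.le (Nat.lt_floor_add_one t)
    _ = (∑ p, |w p|) * r⁻¹ * Real.exp (-(-Real.log r) * t) := by ring_nf

end Matrix

section Laplacian

variable {n : Type*} [Fintype n] [DecidableEq n] {a : n → n → ℝ}

def weightedLaplacian (a : n → n → ℝ) : Matrix n n ℝ :=
  Matrix.of fun i j => if i = j then ∑ k, a i k else -a i j

theorem neg_weightedLaplacian_apply_of_ne {i j : n} (h : i ≠ j) :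
    (-weightedLaplacian a) i j = a i j := by
  simp [weightedLaplacian, h]

theorem weightedLaplacian_mulVec_apply (ha : ∀ i, a i i = 0) (x : n → ℝ) (i : n) :
    (weightedLaplacian a *ᵥ x) i = ∑ j, a i j * (x i - x j) := by
  have hentry (j : n) : weightedLaplacian a i j = (if i = j then ∑ k, a i k else 0) - a i j := by
    by_cases h : i = j
    · subst h; simp [weightedLaplacian, ha]
    · simp [weightedLaplacian, h]
  simp only [mulVec, dotProduct, hentry, sub_mul, ite_mul, zero_mul, sum_sub_distrib,
    sum_ite_eq, mem_univ, if_true, mul_sub, sum_mul]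

theorem isMetzler_neg_weightedLaplacian (ha : ∀ i j, 0 ≤ a i j) :
    (-weightedLaplacian a).IsMetzler :=
  fun i j h => (neg_weightedLaplacian_apply_of_ne h).symm ▸ ha i j

theorem consensus_eq_exp (ha : ∀ i, a i i = 0) {X : n → ℝ → n → ℝ}
    (hinit : ∀ i, X i 0 = fun k => if k = i then (1 : ℝ) else 0)
    (hdyn : ∀ i, ∀ t ≥ (0 : ℝ), ∀ k, HasDerivAt (fun s => X i s k)
      (-(∑ j, a i j * (X i t k - X j t k))) t)
    {t : ℝ} (ht : 0 ≤ t) (i k : n) : X i t k = exp (t • -weightedLaplacian a) i k := by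
  have hcol : ∀ s ≥ (0 : ℝ), HasDerivAt (fun u p => X p u k)
      (-weightedLaplacian a *ᵥ fun p => X p s k) s := fun s hs =>
    hasDerivAt_pi.2 fun p => by
      simpa [neg_mulVec, weightedLaplacian_mulVec_apply ha] using hdyn p s hs k
  have hinit_col : (fun p => X p 0 k) = Pi.single k 1 := by
    ext p
    simp [hinit, Pi.single_apply, eq_comm]
  have := congrFun (eq_exp_smul_mulVec_of_hasDerivAt hcol ht) i
  simpa [hinit_col] using this

end Laplacian

theorem left_eigenvector_estimator_general
    (N : ℕ)
    -- the weighted digraph and its Laplacian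
    (a : Fin N → Fin N → ℝ) (L : Matrix (Fin N) (Fin N) ℝ)
    (ha_nonneg : ∀ i j, 0 ≤ a i j) (ha_diag : ∀ i, a i i = 0)
    (hLdef : ∀ i j, L i j = if i = j then ∑ k, a i k else -(a i j))
    -- strongly connected (irreducible adjacency matrix)
    (hconn : ∀ S : Finset (Fin N), S.Nonempty → S ≠ Finset.univ →
      ∃ i ∈ S, ∃ j, j ∉ S ∧ 0 < a i j)
    -- the normalized left eigenvector: ξᵀL = 0, ξᵀ1 = 1
    (xi : Fin N → ℝ)
    (hxiL : ∀ j, ∑ k, xi k * L k j = 0) (hxi1 : ∑ k, xi k = 1)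
    -- the estimator trajectories ξⁱ : [0,∞) → ℝ^N
    (Xi : Fin N → ℝ → (Fin N → ℝ))
    (hinit : ∀ i, Xi i 0 = fun k => if k = i then (1:ℝ) else 0)
    (hdyn : ∀ i, ∀ t ≥ (0:ℝ), ∀ k, HasDerivAt (fun s => Xi i s k)
      (-(∑ j, a i j * (Xi i t k - Xi j t k))) t) :
    ∀ i,
      -- (a) positivity of the diagonal estimate
      (∀ t ≥ (0:ℝ), 0 < Xi i t i) ∧
      -- (b) exponential convergence to ξ_i
      (∃ c > (0:ℝ), ∃ β > (0:ℝ), ∀ t ≥ (0:ℝ),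
        |Xi i t i - xi i| ≤ c * Real.exp (-β * t)) := by
  obtain rfl : L = weightedLaplacian a := Matrix.ext hLdef
  have hA := isMetzler_neg_weightedLaplacian ha_nonneg
  have hcut : (-weightedLaplacian a).IsCutConnected := fun S hS hSu => by
    obtain ⟨i, hi, j, hj, hij⟩ := hconn S hS hSu
    exact ⟨i, hi, j, hj, by rwa [neg_weightedLaplacian_apply_of_ne (ne_of_mem_of_not_mem hi hj)]⟩
  have hA1 : -weightedLaplacian a *ᵥ 1 = 0 := by
    ext i
    simp [neg_mulVec, weightedLaplacian_mulVec_apply ha_diag]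
  have hxiA : xi ᵥ* -weightedLaplacian a = 0 := by
    ext j
    simpa [vecMul_neg, vecMul, dotProduct] using hxiL j
  obtain ⟨c, hc, β, hβ, hconv⟩ := hA.exists_abs_exp_smul_apply_sub_le hcut hA1 hxiA hxi1
  intro i
  refine ⟨fun t ht => ?_, c, hc, β, hβ, fun t ht => ?_⟩
  · rw [consensus_eq_exp ha_diag hinit hdyn ht]
    exact (hA.smul ht).exp_apply_self_pos i
  · rw [consensus_eq_exp ha_diag hinit hdyn ht]
    exact hconv t ht i i

/-- For the consensus dynamics `ξ̇ⁱ = −Σⱼ a_{ij}(ξⁱ − ξʲ)` over a strongly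
connected digraph with initial conditions `ξⁱ(0) = e_i`, each diagonal estimate `ξⁱ_i(t)`
stays positive and converges exponentially to the `i`-th entry of the normalized left
eigenvector `ξ` of the Laplacian. -/
theorem left_eigenvector_estimator
    (N : ℕ) (hN : 1 ≤ N)
    -- the weighted digraph and its Laplacian
    (a : Fin N → Fin N → ℝ) (L : Matrix (Fin N) (Fin N) ℝ)
    (ha_nonneg : ∀ i j, 0 ≤ a i j) (ha_diag : ∀ i, a i i = 0)
    (hLdef : ∀ i j, L i j = if i = j then ∑ k, a i k else -(a i j))
    -- strongly connected (irreducible adjacency matrix)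
    (hconn : ∀ S : Finset (Fin N), S.Nonempty → S ≠ Finset.univ →
      ∃ i ∈ S, ∃ j, j ∉ S ∧ 0 < a i j)
    -- the normalized left eigenvector: ξᵀL = 0, ξᵀ1 = 1
    (xi : Fin N → ℝ)
    (hxiL : ∀ j, ∑ k, xi k * L k j = 0) (hxi1 : ∑ k, xi k = 1)
    -- the estimator trajectories ξⁱ : [0,∞) → ℝ^N
    (Xi : Fin N → ℝ → (Fin N → ℝ))
    (hinit : ∀ i, Xi i 0 = fun k => if k = i then (1:ℝ) else 0)
    (hdyn : ∀ i, ∀ t ≥ (0:ℝ), ∀ k, HasDerivAt (fun s => Xi i s k)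
      (-(∑ j, a i j * (Xi i t k - Xi j t k))) t) :
    ∀ i,
      -- (a) positivity of the diagonal estimate
      (∀ t ≥ (0:ℝ), 0 < Xi i t i) ∧
      -- (b) exponential convergence to ξ_i
      (∃ c > (0:ℝ), ∃ β > (0:ℝ), ∀ t ≥ (0:ℝ),
        |Xi i t i - xi i| ≤ c * Real.exp (-β * t)) :=
  left_eigenvector_estimator_general N a L ha_nonneg ha_diag hLdef hconn xi hxiL hxi1 Xi hinit hdyn
end

section
/- Let L ∈ ℝ^{N×N} be the Laplacian of a weight-balanced strongly connected digraph (so L 1 = 0, 1ᵀL = 0, and the kernel of L is spanned by 1), let α > 0, and let each J_i : ℝ^N → ℝ be continuously differentiable. If Z* ∈ ℝ^{N×N} is an equilibrium of the seeking dynamics, i.e., α L Z* + diag(𝐅(Z*)) = 0 (entrywise: α Σ_k L_{ik} Z*_{kj} + δ_{ij} 𝐅(Z*)_i = 0 for all i, j), then there exists θ ∈ ℝ^N such that Z* = 1 θᵀ (all rows of Z* equal θ) and F(θ) = 0, i.e., ∂J_i/∂z_i(θ) = 0 for every i. -/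
/-!
Summing the equilibrium equation over the rows of a column `j` kills the Laplacian term,
because `1ᵀ L = 0`, and leaves `𝐅(Z*)_j = 0`. Then `L Z* = 0`, so every column of `Z*` lies in
the kernel of `L`. A maximum principle shows that on a strongly connected digraph this kernel
consists of constant vectors, so all rows of `Z*` agree with a common `θ`, and `𝐅(Z*) = F(θ)`.
-/

open Finset Matrix

section Laplacian

variable {ι : Type*} [Fintype ι]

/-- At a maximum of `x`, each term of `∑ k, a i k * (x i - x k)` is nonnegative; strong
connectivity forces a positive term unless `x` is constant. -/
theorem eq_of_forall_sum_mul_sub_eq_zero (a : ι → ι → ℝ) (ha_nonneg : ∀ i j, 0 ≤ a i j)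
    (hconn : ∀ S : Finset ι, S.Nonempty → S ≠ univ → ∃ i ∈ S, ∃ j, j ∉ S ∧ 0 < a i j)
    (x : ι → ℝ) (hx : ∀ i, ∑ k, a i k * (x i - x k) = 0) (i j : ι) : x i = x j := by
  have : Nonempty ι := ⟨i⟩
  obtain ⟨m, hm⟩ := Finite.exists_max x
  suffices h : ∀ k, x k = x m by rw [h i, h j]
  by_contra hne
  have hS : univ.filter (fun k => x k = x m) ≠ univ :=
    fun h => hne fun k => filter_eq_self.mp h k (mem_univ k)
  obtain ⟨p, hp, q, hq, hapq⟩ := hconn _ ⟨m, by simp⟩ hS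
  simp only [mem_filter, mem_univ, true_and] at hp hq
  have hpos : 0 < ∑ k, a p k * (x p - x k) :=
    sum_pos' (fun k _ => mul_nonneg (ha_nonneg p k) (by linarith [hm k]))
      ⟨q, mem_univ q, mul_pos hapq (by linarith [hm q, lt_of_le_of_ne (hm q) hq])⟩
  exact hpos.ne' (hx p)

variable [DecidableEq ι]

def laplacian (a : ι → ι → ℝ) : Matrix ι ι ℝ :=
  Matrix.of fun i j => if i = j then ∑ k, a i k else -a i j

theorem laplacian_eq_diagonal_sub {a : ι → ι → ℝ} (ha_diag : ∀ i, a i i = 0) :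
    laplacian a = diagonal (fun i => ∑ k, a i k) - Matrix.of a := by
  ext i j
  by_cases hij : i = j
  · subst hij
    simp [laplacian, ha_diag]
  · simp [laplacian, hij]

theorem laplacian_mulVec_apply {a : ι → ι → ℝ} (ha_diag : ∀ i, a i i = 0) (x : ι → ℝ)
    (i : ι) : (laplacian a *ᵥ x) i = ∑ k, a i k * (x i - x k) := by
  rw [laplacian_eq_diagonal_sub ha_diag, sub_mulVec, Pi.sub_apply, mulVec_diagonal]
  simp only [mul_sub, sum_sub_distrib, ← sum_mul]
  rfl

theorem eq_of_laplacian_mulVec_eq_zero {a : ι → ι → ℝ} (ha_nonneg : ∀ i j, 0 ≤ a i j)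
    (ha_diag : ∀ i, a i i = 0)
    (hconn : ∀ S : Finset ι, S.Nonempty → S ≠ univ → ∃ i ∈ S, ∃ j, j ∉ S ∧ 0 < a i j)
    {x : ι → ℝ} (hx : laplacian a *ᵥ x = 0) (i j : ι) : x i = x j :=
  eq_of_forall_sum_mul_sub_eq_zero a ha_nonneg hconn x
    (fun k => (laplacian_mulVec_apply ha_diag x k).symm.trans (congrFun hx k)) i j

end Laplacian

theorem eq_zero_of_smul_mul_add_diagonal_eq_zero {ι : Type*} [Fintype ι] [DecidableEq ι]
    {L Z : Matrix ι ι ℝ} {α : ℝ} {d : ι → ℝ} (hbal : (1 : ι → ℝ) ᵥ* L = 0)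
    (h : α • (L * Z) + diagonal d = 0) : d = 0 := by
  have h1 := congrArg ((1 : ι → ℝ) ᵥ* ·) h
  funext j
  simpa [vecMul_add, vecMul_smul, ← vecMul_vecMul, hbal, vecMul_diagonal] using congrFun h1 j

theorem equilibrium_is_nash_general
    (N : ℕ)
    -- the weighted digraph and its Laplacian
    (a : Fin N → Fin N → ℝ) (L : Matrix (Fin N) (Fin N) ℝ)
    (ha_nonneg : ∀ i j, 0 ≤ a i j) (ha_diag : ∀ i, a i i = 0)
    (hLdef : ∀ i j, L i j = if i = j then ∑ k, a i k else -(a i j))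
    -- strongly connected (irreducible adjacency matrix)
    (hconn : ∀ S : Finset (Fin N), S.Nonempty → S ≠ Finset.univ →
      ∃ i ∈ S, ∃ j, j ∉ S ∧ 0 < a i j)
    -- weight-balanced: 1ᵀ L = 0
    (hbal : ∀ j, ∑ i, L i j = 0)
    -- the gain
    (α : ℝ) (hα : 0 < α)
    (J : Fin N → (Fin N → ℝ) → ℝ)
    -- an equilibrium of the seeking dynamics: α L Z* + diag(𝐅(Z*)) = 0, entrywise,
    -- where 𝐅(Z*)_i = (∂J_i/∂z_i)(Zⁱ) is evaluated at row i of Z*.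
    (Zstar : Matrix (Fin N) (Fin N) ℝ)
    (hEq : ∀ i j, α * (∑ k, L i k * Zstar k j) +
      (if i = j then
        deriv (fun y : ℝ => J i (Function.update (Zstar i) i y)) (Zstar i i)
       else 0) = 0) :
    ∃ θ : Fin N → ℝ, (∀ i j, Zstar i j = θ j) ∧
      ∀ i, deriv (fun y : ℝ => J i (Function.update θ i y)) (θ i) = 0 := by
  set d : Fin N → ℝ := fun i => deriv (fun y => J i (Function.update (Zstar i) i y)) (Zstar i i)
  have hL : L = laplacian a := Matrix.ext hLdef
  have hdyn : α • (L * Zstar) + diagonal d = 0 := by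
    ext i j
    simpa [Matrix.mul_apply, diagonal_apply] using hEq i j
  have hbal' : (1 : Fin N → ℝ) ᵥ* L = 0 :=
    funext fun j => by simpa [vecMul, dotProduct] using hbal j
  have hd : d = 0 := eq_zero_of_smul_mul_add_diagonal_eq_zero hbal' hdyn
  have hLZ : L * Zstar = 0 := by simpa [hd, hα.ne'] using hdyn
  have hcol : ∀ i j, Zstar i j = Zstar j j := fun i j =>
    eq_of_laplacian_mulVec_eq_zero (x := fun k => Zstar k j) ha_nonneg ha_diag hconn
      (funext fun k => by rw [← hL]; exact congrFun (congrFun hLZ k) j) i j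
  refine ⟨fun j => Zstar j j, hcol, fun i => ?_⟩
  have hrow : (fun j => Zstar j j) = Zstar i := funext fun j => (hcol i j).symm
  rw [hrow]
  exact congrFun hd i

/-- Any equilibrium of the seeking dynamics
`α L Z* + diag(𝐅(Z*)) = 0` over a weight-balanced strongly connected digraph is a
consensus matrix `Z* = 1 θᵀ` with `F(θ) = 0`, i.e. `∂J_i/∂z_i(θ) = 0` for every `i`. -/
theorem equilibrium_is_nash
    (N : ℕ) (hN : 1 ≤ N)
    -- the weighted digraph and its Laplacian
    (a : Fin N → Fin N → ℝ) (L : Matrix (Fin N) (Fin N) ℝ)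
    (ha_nonneg : ∀ i j, 0 ≤ a i j) (ha_diag : ∀ i, a i i = 0)
    (hLdef : ∀ i j, L i j = if i = j then ∑ k, a i k else -(a i j))
    -- strongly connected (irreducible adjacency matrix)
    (hconn : ∀ S : Finset (Fin N), S.Nonempty → S ≠ Finset.univ →
      ∃ i ∈ S, ∃ j, j ∉ S ∧ 0 < a i j)
    -- weight-balanced: 1ᵀ L = 0
    (hbal : ∀ j, ∑ i, L i j = 0)
    -- the gain
    (α : ℝ) (hα : 0 < α)
    -- continuously differentiable cost functions
    (J : Fin N → (Fin N → ℝ) → ℝ) (hJ : ∀ i, ContDiff ℝ 1 (J i))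
    -- an equilibrium of the seeking dynamics: α L Z* + diag(𝐅(Z*)) = 0, entrywise,
    -- where 𝐅(Z*)_i = (∂J_i/∂z_i)(Zⁱ) is evaluated at row i of Z*.
    (Zstar : Matrix (Fin N) (Fin N) ℝ)
    (hEq : ∀ i j, α * (∑ k, L i k * Zstar k j) +
      (if i = j then
        deriv (fun y : ℝ => J i (Function.update (Zstar i) i y)) (Zstar i i)
       else 0) = 0) :
    ∃ θ : Fin N → ℝ, (∀ i j, Zstar i j = θ j) ∧
      ∀ i, deriv (fun y : ℝ => J i (Function.update θ i y)) (θ i) = 0 :=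
  equilibrium_is_nash_general N a L ha_nonneg ha_diag hLdef hconn hbal α hα J Zstar hEq
end

section
/- Let L ∈ ℝ^{N×N} be the Laplacian of a strongly connected weighted digraph. Then 0 is a simple eigenvalue of L; more precisely, there exists exactly one vector ξ ∈ ℝ^N satisfying ξᵀL = 0 and ξᵀ1 = 1, and this vector is entrywise strictly positive: ξ_i > 0 for every i = 1, …, N. -/
/-!
Since the off-diagonal entries of `L` are nonpositive, the positive part `ξ⁺` of a left null
vector `ξ` satisfies `ξ⁺ᵀL ≤ 0` entrywise; the entries of `ξ⁺ᵀL` sum to `ξ⁺ᵀL1 = 0`, so `ξ⁺` is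
again a left null vector. A nonnegative left null vector that vanishes at `j` vanishes at every
`i` with an edge `i → j`, so by strong connectivity it is either `0` or strictly positive. Hence
every left null vector is either `≤ 0` or `> 0`, and one with entry sum `0` is `0`: this gives
uniqueness. Since `L1 = 0`, `L` is singular, and a nonzero left null vector can be normalized.
-/

open Finset

namespace Matrix

variable {ι : Type*} [Fintype ι]

theorem vecMul_posPart_apply_nonpos {L : Matrix ι ι ℝ} (hL : ∀ i j, i ≠ j → L i j ≤ 0)
    {ξ : ι → ℝ} (hξ : ξ ᵥ* L = 0) (j : ι) : (ξ⁺ ᵥ* L) j ≤ 0 := by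
  rcases le_or_gt (ξ j) 0 with hj | hj
  · refine sum_nonpos fun k _ => ?_
    rcases eq_or_ne k j with rfl | hkj
    · simp [posPart_eq_zero.mpr hj]
    · exact mul_nonpos_of_nonneg_of_nonpos (posPart_nonneg _) (hL k j hkj)
  · calc (ξ⁺ ᵥ* L) j ≤ (ξ ᵥ* L) j := sum_le_sum fun k _ => ?_
      _ = 0 := by rw [hξ, Pi.zero_apply]
    rcases eq_or_ne k j with rfl | hkj
    · simp [posPart_eq_self.mpr hj.le]
    · exact mul_le_mul_of_nonpos_right (le_posPart _) (hL k j hkj)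

theorem vecMul_eq_zero_of_apply_nonpos {L : Matrix ι ι ℝ} (hL : L *ᵥ 1 = 0) {η : ι → ℝ}
    (hη : ∀ j, (η ᵥ* L) j ≤ 0) : η ᵥ* L = 0 := by
  have hsum : ∑ j, (η ᵥ* L) j = 0 := by
    rw [← dotProduct_one, ← dotProduct_mulVec, hL, dotProduct_zero]
  funext j
  exact (sum_eq_zero_iff_of_nonpos fun j _ => hη j).mp hsum j (mem_univ j)

theorem eq_zero_or_pos_of_vecMul_eq_zero {L : Matrix ι ι ℝ} (hL : ∀ i j, i ≠ j → L i j ≤ 0)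
    (hconn : ∀ S : Finset ι, S.Nonempty → S ≠ univ → ∃ i ∈ S, ∃ j ∉ S, L i j < 0)
    {ξ : ι → ℝ} (hξ₀ : 0 ≤ ξ) (hξ : ξ ᵥ* L = 0) : ξ = 0 ∨ ∀ i, 0 < ξ i := by
  classical
  by_contra! h
  obtain ⟨hne, j₀, hj₀⟩ := h
  set S := univ.filter fun i => 0 < ξ i
  have hS : S.Nonempty := by
    obtain ⟨i, hi⟩ := Function.ne_iff.mp hne
    exact ⟨i, mem_filter.mpr ⟨mem_univ i, (hξ₀ i).lt_of_ne' hi⟩⟩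
  have hSu : S ≠ univ := fun h =>
    hj₀.not_gt (mem_filter.mp (h ▸ mem_univ j₀ : j₀ ∈ S)).2
  obtain ⟨i, hi, j, hj, hij⟩ := hconn S hS hSu
  have hξi : 0 < ξ i := (mem_filter.mp hi).2
  have hξj : ξ j = 0 := le_antisymm (by simpa [S] using hj) (hξ₀ j)
  have hterm : ∀ k ∈ univ, ξ k * L k j ≤ 0 := fun k _ => by
    rcases eq_or_ne k j with rfl | hkj
    · simp [hξj]
    · exact mul_nonpos_of_nonneg_of_nonpos (hξ₀ k) (hL k j hkj)
  have hvanish := (sum_eq_zero_iff_of_nonpos hterm).mp (congrFun hξ j) i (mem_univ i)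
  exact (mul_neg_of_pos_of_neg hξi hij).ne hvanish

structure IsStronglyConnectedLaplacian (L : Matrix ι ι ℝ) : Prop where
  apply_nonpos_of_ne : ∀ i j, i ≠ j → L i j ≤ 0
  mulVec_one : L *ᵥ 1 = 0
  exists_apply_neg : ∀ S : Finset ι, S.Nonempty → S ≠ univ → ∃ i ∈ S, ∃ j ∉ S, L i j < 0

namespace IsStronglyConnectedLaplacian

variable {L : Matrix ι ι ℝ}

theorem nonpos_or_pos_of_vecMul_eq_zero (hL : L.IsStronglyConnectedLaplacian) {ξ : ι → ℝ}
    (hξ : ξ ᵥ* L = 0) : ξ ≤ 0 ∨ ∀ i, 0 < ξ i := by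
  have hξ' : ξ⁺ ᵥ* L = 0 := vecMul_eq_zero_of_apply_nonpos hL.mulVec_one
    (vecMul_posPart_apply_nonpos hL.apply_nonpos_of_ne hξ)
  exact (eq_zero_or_pos_of_vecMul_eq_zero hL.apply_nonpos_of_ne hL.exists_apply_neg
    (posPart_nonneg ξ) hξ').imp posPart_eq_zero.mp fun h i => posPart_pos_iff.mp (h i)

theorem eq_zero_of_vecMul_eq_zero_of_sum_eq_zero (hL : L.IsStronglyConnectedLaplacian)
    {ξ : ι → ℝ} (hξ : ξ ᵥ* L = 0) (hsum : ∑ i, ξ i = 0) : ξ = 0 := by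
  funext i
  rcases hL.nonpos_or_pos_of_vecMul_eq_zero hξ with hneg | hpos
  · exact (sum_eq_zero_iff_of_nonpos fun i _ => hneg i).mp hsum i (mem_univ i)
  · exact (sum_eq_zero_iff_of_nonneg fun i _ => (hpos i).le).mp hsum i (mem_univ i)

theorem pos_of_vecMul_eq_zero_of_sum_eq_one (hL : L.IsStronglyConnectedLaplacian)
    {ξ : ι → ℝ} (hξ : ξ ᵥ* L = 0) (hsum : ∑ i, ξ i = 1) (i : ι) : 0 < ξ i := by
  refine (hL.nonpos_or_pos_of_vecMul_eq_zero hξ).resolve_left (fun hneg => ?_) i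
  linarith [sum_nonpos fun i (_ : i ∈ univ) => hneg i]

theorem exists_vecMul_eq_zero_sum_eq_one [Nonempty ι] (hL : L.IsStronglyConnectedLaplacian) :
    ∃ ξ : ι → ℝ, ξ ᵥ* L = 0 ∧ ∑ i, ξ i = 1 := by
  classical
  obtain ⟨ξ, hne, hξ⟩ : ∃ ξ ≠ 0, ξ ᵥ* L = 0 :=
    exists_vecMul_eq_zero_iff.mpr (exists_mulVec_eq_zero_iff.mp ⟨1, one_ne_zero, hL.mulVec_one⟩)
  have hs : ∑ i, ξ i ≠ 0 := fun h => hne (hL.eq_zero_of_vecMul_eq_zero_of_sum_eq_zero hξ h)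
  refine ⟨(∑ i, ξ i)⁻¹ • ξ, by rw [smul_vecMul, hξ, smul_zero], ?_⟩
  simp [← mul_sum, hs]

end IsStronglyConnectedLaplacian

def laplacian [DecidableEq ι] (a : ι → ι → ℝ) : Matrix ι ι ℝ :=
  diagonal (fun i => ∑ k, a i k) - of a

theorem isStronglyConnectedLaplacian_laplacian [DecidableEq ι] {a : ι → ι → ℝ}
    (ha : ∀ i j, 0 ≤ a i j)
    (hconn : ∀ S : Finset ι, S.Nonempty → S ≠ univ → ∃ i ∈ S, ∃ j ∉ S, 0 < a i j) :
    (laplacian a).IsStronglyConnectedLaplacian where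
  apply_nonpos_of_ne i j hij := by simp [laplacian, hij, ha]
  mulVec_one := by
    ext i
    rw [laplacian, sub_mulVec, Pi.sub_apply, mulVec_diagonal, Pi.zero_apply, sub_eq_zero]
    simp [mulVec, dotProduct]
  exists_apply_neg S hS hSu := by
    obtain ⟨i, hi, j, hj, hij⟩ := hconn S hS hSu
    exact ⟨i, hi, j, hj, by simpa [laplacian, ne_of_mem_of_not_mem hi hj] using hij⟩

end Matrix

/-- The Laplacian of a strongly connected weighted digraph has a unique
normalized left eigenvector for the eigenvalue `0` (`ξᵀL = 0`, `ξᵀ1 = 1`), and this vector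
is entrywise strictly positive. -/
theorem left_eigenvector_unique_positive
    (N : ℕ) (hN : 1 ≤ N)
    -- the weighted digraph and its Laplacian
    (a : Fin N → Fin N → ℝ) (L : Matrix (Fin N) (Fin N) ℝ)
    (ha_nonneg : ∀ i j, 0 ≤ a i j) (ha_diag : ∀ i, a i i = 0)
    (hLdef : ∀ i j, L i j = if i = j then ∑ k, a i k else -(a i j))
    -- strongly connected (irreducible adjacency matrix)
    (hconn : ∀ S : Finset (Fin N), S.Nonempty → S ≠ Finset.univ →
      ∃ i ∈ S, ∃ j, j ∉ S ∧ 0 < a i j) :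
    ∃ xi : Fin N → ℝ,
      ((∀ j, ∑ k, xi k * L k j = 0) ∧ (∑ k, xi k = 1) ∧ (∀ i, 0 < xi i)) ∧
      ∀ xi' : Fin N → ℝ,
        (∀ j, ∑ k, xi' k * L k j = 0) → (∑ k, xi' k = 1) → xi' = xi := by
  have : Nonempty (Fin N) := ⟨⟨0, hN⟩⟩
  obtain rfl : L = Matrix.laplacian a := by
    ext i j
    rcases eq_or_ne i j with rfl | hij
    · simp [hLdef, Matrix.laplacian, ha_diag]
    · simp [hLdef, Matrix.laplacian, hij]
  have hL := Matrix.isStronglyConnectedLaplacian_laplacian ha_nonneg hconn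
  obtain ⟨ξ, hξ, hsum⟩ := hL.exists_vecMul_eq_zero_sum_eq_one
  refine ⟨ξ, ⟨congrFun hξ, hsum, hL.pos_of_vecMul_eq_zero_of_sum_eq_one hξ hsum⟩,
    fun ξ' hξ' hsum' => sub_eq_zero.mp <| hL.eq_zero_of_vecMul_eq_zero_of_sum_eq_zero ?_ ?_⟩
  · have hξ'L : Matrix.vecMul ξ' (Matrix.laplacian a) = 0 := funext hξ'
    rw [Matrix.sub_vecMul, hξ'L, hξ, sub_zero]
  · simp [sum_sub_distrib, hsum, hsum']
end
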